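/- Let w be a multilinear commutator word, G a profinite group, and N an open normal subgroup of G. Then the w*-residual of N in G is an open subgroup of the verbal subgroup w(G), i.e. it has finite index in w(G). -/

import Mathlib

/-- Multilinear commutator words: the word `x` in one variable is a multilinear commutator
word, and if `u` and `v` are multilinear commutator words (on disjoint sets of variables,
here enforced by using `m + n` fresh variables), then `[u,v]` is one. -/
inductive MultilinearCommutatorWord : ℕ → Type
  | var : MultilinearCommutatorWord 1
  | comm : ∀ {m n : ℕ}, MultilinearCommutatorWord m → MultilinearCommutatorWord n →
      MultilinearCommutatorWord (m + n)

namespace MultilinearCommutatorWord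

open scoped commutatorElement

/-- Evaluation of a multilinear commutator word on a tuple of group elements. -/
def eval {G : Type*} [Group G] : ∀ {n : ℕ}, MultilinearCommutatorWord n → (Fin n → G) → G
  | _, var, f => f 0
  | _, comm u v, f =>
      ⁅eval u (fun i => f (Fin.castAdd _ i)), eval v (fun j => f (Fin.natAdd _ j))⁆

end MultilinearCommutatorWord


/-- The marginal subgroup `w*(G)` of a group `G` corresponding to the word `w`, as a set:
all `x` such that inserting `x` on either side of any entry does not change the value of `w`. -/
def marginal {G : Type*} [Group G] {n : ℕ} (w : MultilinearCommutatorWord n) : Set G :=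
  {x : G | ∀ (g : Fin n → G) (i : Fin n),
    w.eval (Function.update g i (x * g i)) = w.eval g ∧
    w.eval (Function.update g i (g i * x)) = w.eval g}

/-- The `w*`-residual of a subset `S` of a topological group `G`: the intersection of all
closed normal subgroups `N` of `G` such that the image of `S` in `G ⧸ N` is contained in
the marginal subgroup `w*(G ⧸ N)`. -/
def wStarResidual {G : Type*} [Group G] [TopologicalSpace G] {n : ℕ}
    (w : MultilinearCommutatorWord n) (S : Set G) : Subgroup G :=
  sInf {N : Subgroup G | IsClosed (N : Set G) ∧ ∃ hN : N.Normal,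
    letI := hN
    ∀ s ∈ S, (QuotientGroup.mk s : G ⧸ N) ∈ marginal w}

/-!
The `w*`-residual `R` of `N` is the closure of the normal subgroup generated by the elements
`w(g)⁻¹ w(g')`, where `g'` arises from `g` by multiplying one entry by an element of `N`; these lie
in `w(G)`. Modulo `R`, the finite-index subgroup `N` is marginal, and a multilinear commutator word
whose marginal subgroup has finite index has a finite verbal subgroup: by induction on the word,
using that normal subgroups `U`, `V` with only finitely many commutators `⁅a, b⁆` (`a ∈ U`, `b ∈ V`)
have a finite commutator subgroup `⁅U, V⁆`. So the image of `w(G)` in `G ⧸ R` is finite, hence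
closed, and contains the image of the closure of `w(G)`, in which `R` therefore has finite index.
-/

open Subgroup Function
open scoped commutatorElement

section Commutators

variable {G : Type*} [Group G]

theorem commute_inv_mul_of_commutatorElement_eq_left {a a' b : G} (h : ⁅a', b⁆ = ⁅a, b⁆) :
    Commute b (a'⁻¹ * a) := by
  have h' : a' * b * a'⁻¹ = a * b * a⁻¹ := mul_right_cancel (b := b⁻¹) h
  calc b * (a'⁻¹ * a) = a'⁻¹ * (a' * b * a'⁻¹) * a := by group
    _ = a'⁻¹ * a * b := by rw [h']; group

theorem commute_inv_mul_of_commutatorElement_eq_right {a b b' : G} (h : ⁅a, b'⁆ = ⁅a, b⁆) :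
    Commute a (b'⁻¹ * b) :=
  commute_inv_mul_of_commutatorElement_eq_left <| by
    rw [← commutatorElement_inv, h, commutatorElement_inv]

theorem commutatorElement_mul_mul_eq {a b c d : G} (hc : Commute c (b * d)) (hd : Commute d a) :
    ⁅a * c, b * d⁆ = ⁅a, b⁆ := by
  calc ⁅a * c, b * d⁆ = a * (c * (b * d)) * c⁻¹ * a⁻¹ * (b * d)⁻¹ := by
        rw [commutatorElement_def]; group
    _ = a * b * (d * a⁻¹) * d⁻¹ * b⁻¹ := by rw [hc.eq]; group
    _ = ⁅a, b⁆ := by rw [hd.inv_right.eq, commutatorElement_def]; group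

def commutatorSetOf (H₁ H₂ : Subgroup G) : Set G :=
  {g | ∃ g₁ ∈ H₁, ∃ g₂ ∈ H₂, ⁅g₁, g₂⁆ = g}

theorem commutator_eq_closure_commutatorSetOf (H₁ H₂ : Subgroup G) :
    ⁅H₁, H₂⁆ = closure (commutatorSetOf H₁ H₂) :=
  commutator_def H₁ H₂

theorem commutatorSetOf_subset_commutator (H₁ H₂ : Subgroup G) :
    commutatorSetOf H₁ H₂ ⊆ (⁅H₁, H₂⁆ : Subgroup G) :=
  subset_closure

theorem image_commutatorSetOf {G' : Type*} [Group G'] (f : G →* G') (H₁ H₂ : Subgroup G) :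
    f '' commutatorSetOf H₁ H₂ = commutatorSetOf (H₁.map f) (H₂.map f) := by
  ext x
  constructor
  · rintro ⟨_, ⟨a, ha, b, hb, rfl⟩, rfl⟩
    exact ⟨f a, mem_map_of_mem f ha, f b, mem_map_of_mem f hb, (map_commutatorElement f a b).symm⟩
  · rintro ⟨_, ⟨a, ha, rfl⟩, _, ⟨b, hb, rfl⟩, rfl⟩
    exact ⟨⁅a, b⁆, ⟨a, ha, b, hb, rfl⟩, map_commutatorElement f a b⟩

theorem relIndex_ne_zero_of_finite_map_mk {K : Subgroup G} [K.Normal] {H : Subgroup G}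
    (h : Finite (H.map (QuotientGroup.mk' K))) : K.relIndex H ≠ 0 := by
  rw [← QuotientGroup.ker_mk' K, relIndex_ker]
  exact Nat.card_pos.ne'

theorem MonoidHom.eq_one_of_mem_finite_of_torsionFree {A : Type*} [Group A] {S : Set G}
    {H : Subgroup G} (htf : ∀ x ∈ H, IsOfFinOrder x → x = 1) (hS : S.Finite) (hSH : S ⊆ H)
    (ψ : A →* G) (hψ : ∀ a, ψ a ∈ S) (a : A) : ψ a = 1 := by
  have : Finite ψ.range := (hS.subset (Set.range_subset_iff.2 hψ)).to_subtype
  exact htf _ (hSH (hψ a)) (ψ.range.subtype.isOfFinOrder (isOfFinOrder_of_finite ⟨ψ a, a, rfl⟩))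

/-- `h ↦ ⁅a, h⁆` on `⁅U, V⁆`, and then `a ↦ ⁅a, b⁆` on `U`, are homomorphisms into a
torsion-free group with finite image. -/
theorem commutator_eq_bot_of_torsionFree {U V : Subgroup G} [U.Normal] [V.Normal]
    [IsMulCommutative (⁅U, V⁆ : Subgroup G)] (hfin : (commutatorSetOf U V).Finite)
    (htf : ∀ x ∈ (⁅U, V⁆ : Subgroup G), IsOfFinOrder x → x = 1) : ⁅U, V⁆ = ⊥ := by
  have hsub := commutatorSetOf_subset_commutator U V
  have hU : ∀ a ∈ U, ∀ h ∈ (⁅U, V⁆ : Subgroup G), ⁅a, h⁆ = 1 := by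
    intro a ha h hh
    have hmem : ∀ h : (⁅U, V⁆ : Subgroup G), ⁅a, (h : G)⁆ ∈ commutatorSetOf U V :=
      fun h => ⟨a, ha, h, commutator_le_right U V h.2, rfl⟩
    let ψ : (⁅U, V⁆ : Subgroup G) →* G :=
      { toFun := fun h => ⁅a, (h : G)⁆
        map_one' := by simp
        map_mul' := fun h₁ h₂ => by
          rw [coe_mul, commutatorElement_mul_right_eq_mul_conj, mul_assoc ⁅a, _⁆,
            setLike_mul_comm h₁.2 (hsub (hmem h₂)), ← mul_assoc, mul_inv_cancel_right] }
    exact ψ.eq_one_of_mem_finite_of_torsionFree htf hfin hsub hmem ⟨h, hh⟩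
  have hUV : ∀ a ∈ U, ∀ b ∈ V, ⁅a, b⁆ = 1 := by
    intro a ha b hb
    have hmem : ∀ a : U, ⁅(a : G), b⁆ ∈ commutatorSetOf U V := fun a => ⟨a, a.2, b, hb, rfl⟩
    let ψ : U →* G :=
      { toFun := fun a => ⁅(a : G), b⁆
        map_one' := by simp
        map_mul' := fun a₁ a₂ => by
          rw [coe_mul, commutatorElement_mul_left_eq_conj_mul,
            commutatorElement_eq_one_iff_mul_comm.1 (hU a₁ a₁.2 _ (hsub (hmem a₂))),
            mul_inv_cancel_right, setLike_mul_comm (hsub (hmem a₂)) (hsub (hmem a₁))] }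
    exact ψ.eq_one_of_mem_finite_of_torsionFree htf hfin hsub hmem ⟨a, ha⟩
  rw [eq_bot_iff, commutator_le]
  exact fun a ha b hb => mem_bot.2 (hUV a ha b hb)

def torsionOf (H : Subgroup G) [IsMulCommutative H] : Subgroup G where
  carrier := {x | x ∈ H ∧ IsOfFinOrder x}
  one_mem' := ⟨H.one_mem, IsOfFinOrder.one⟩
  mul_mem' hx hy := ⟨H.mul_mem hx.1 hy.1,
    Commute.isOfFinOrder_mul (setLike_mul_comm hx.1 hy.1) hx.2 hy.2⟩
  inv_mem' hx := ⟨H.inv_mem hx.1, hx.2.inv⟩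

instance (H : Subgroup G) [H.Normal] [IsMulCommutative H] : (torsionOf H).Normal where
  conj_mem x hx g :=
    ⟨‹H.Normal›.conj_mem x hx.1 g, (MulAut.conj g).toMonoidHom.isOfFinOrder hx.2⟩

/-- Modulo its torsion, `⁅U, V⁆` becomes torsion-free, hence trivial. -/
theorem isOfFinOrder_of_mem_commutator {U V : Subgroup G} [U.Normal] [V.Normal]
    [IsMulCommutative (⁅U, V⁆ : Subgroup G)] (hfin : (commutatorSetOf U V).Finite) {x : G}
    (hx : x ∈ (⁅U, V⁆ : Subgroup G)) : IsOfFinOrder x := by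
  set ρ := QuotientGroup.mk' (torsionOf (⁅U, V⁆ : Subgroup G))
  have hρ : Surjective ρ := QuotientGroup.mk'_surjective _
  have := ‹U.Normal›.map ρ hρ
  have := ‹V.Normal›.map ρ hρ
  have hmap : ⁅U.map ρ, V.map ρ⁆ = (⁅U, V⁆ : Subgroup G).map ρ := (map_commutator U V ρ).symm
  have : IsMulCommutative (⁅U.map ρ, V.map ρ⁆ : Subgroup (G ⧸ torsionOf ⁅U, V⁆)) :=
    hmap ▸ inferInstance
  have hbot : ⁅U.map ρ, V.map ρ⁆ = ⊥ := by
    refine commutator_eq_bot_of_torsionFree (image_commutatorSetOf ρ U V ▸ hfin.image ρ) ?_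
    rw [hmap]
    rintro _ ⟨y, hy, rfl⟩ hord
    obtain ⟨k, hk, hyk⟩ := hord.exists_pow_eq_one
    have hk' : y ^ k ∈ torsionOf (⁅U, V⁆ : Subgroup G) :=
      (QuotientGroup.eq_one_iff _).1 (by rw [← hyk]; rfl)
    exact (QuotientGroup.eq_one_iff y).2 ⟨hy, hk'.2.of_pow hk.ne'⟩
  have : ρ x = 1 := by rw [← mem_bot, ← hbot, hmap]; exact mem_map_of_mem ρ hx
  exact ((QuotientGroup.eq_one_iff x).1 this).2

/-- Modulo `⁅H, H⁆`, which is finite by Schur's theorem, `H = ⁅U, V⁆` is a finitely generated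
abelian torsion group. -/
theorem finite_commutator_of_finite_commutatorSetOf {U V : Subgroup G} [U.Normal] [V.Normal]
    (hfin : (commutatorSetOf U V).Finite) : Finite (⁅U, V⁆ : Subgroup G) := by
  set H : Subgroup G := ⁅U, V⁆
  have hH' : Finite (⁅H, H⁆ : Subgroup G) := by
    have : Finite (commutatorSet H) := by
      refine (Set.Finite.of_finite_image (hfin.subset ?_) Subtype.val_injective.injOn).to_subtype
      rintro _ ⟨_, ⟨g₁, g₂, rfl⟩, rfl⟩
      exact ⟨g₁, commutator_le_left U V g₁.2, g₂, commutator_le_right U V g₂.2, rfl⟩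
    have heq : ⁅H, H⁆ = (_root_.commutator H).map H.subtype := by
      rw [_root_.commutator_def, map_commutator, ← MonoidHom.range_eq_map, H.range_subtype]
    have : Finite (_root_.commutator H) := inferInstance
    rw [heq, ← SetLike.coe_sort_coe, coe_map]
    exact ((Set.toFinite _).image _).to_subtype
  set π := QuotientGroup.mk' ⁅H, H⁆
  have hπ : Surjective π := QuotientGroup.mk'_surjective _
  have := ‹U.Normal›.map π hπ
  have := ‹V.Normal›.map π hπ
  have hmap : ⁅U.map π, V.map π⁆ = H.map π := (map_commutator U V π).symm
  have : IsMulCommutative (⁅U.map π, V.map π⁆ : Subgroup (G ⧸ ⁅H, H⁆)) := by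
    refine hmap ▸ .of_setLike_mul_comm ?_
    rintro _ ⟨x, hx, rfl⟩ _ ⟨y, hy, rfl⟩
    rw [← commutatorElement_eq_one_iff_mul_comm, ← map_commutatorElement, ← MonoidHom.mem_ker,
      QuotientGroup.ker_mk']
    exact commutator_mem_commutator hx hy
  have hfin' : (commutatorSetOf (U.map π) (V.map π)).Finite :=
    image_commutatorSetOf π U V ▸ hfin.image π
  have hHbar : Finite (H.map π) := by
    rw [← hmap]
    have : Finite (commutatorSetOf (U.map π) (V.map π)) := hfin'.to_subtype
    have : Group.FG (⁅U.map π, V.map π⁆ : Subgroup (G ⧸ ⁅H, H⁆)) := by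
      rw [commutator_eq_closure_commutatorSetOf (U.map π) (V.map π)]
      exact Group.closure_finite_fg _
    open scoped IsMulCommutative in
    exact CommGroup.finite_of_fg_isMulTorsion _ fun x =>
      Submonoid.isOfFinOrder_coe.1 (isOfFinOrder_of_mem_commutator hfin' x.2)
  apply Nat.finite_of_card_ne_zero
  rw [← relIndex_bot_left, ← relIndex_mul_relIndex ⊥ ⁅H, H⁆ H bot_le (commutator_le_left H H),
    relIndex_bot_left]
  exact mul_ne_zero Nat.card_pos.ne' (relIndex_ne_zero_of_finite_map_mk hHbar)

/-- `⁅a, b⁆` depends only on the cosets of `a` modulo `C` and of `b` modulo `D`. -/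
theorem finite_commutatorSetOf {U V C D : Subgroup G} (hC : C ≤ centralizer V)
    (hD : D ≤ centralizer U) (hCU : C.relIndex U ≠ 0) (hDV : D.relIndex V ≠ 0) :
    (commutatorSetOf U V).Finite := by
  have : (C.subgroupOf U).FiniteIndex := ⟨hCU⟩
  have : (D.subgroupOf V).FiniteIndex := ⟨hDV⟩
  let f : U ⧸ C.subgroupOf U → V ⧸ D.subgroupOf V → G :=
    Quotient.lift₂ (fun a b => ⁅(a : G), (b : G)⁆) fun a₁ b₁ a₂ b₂ ha hb => by
      replace ha : a₁⁻¹ * a₂ ∈ C.subgroupOf U := QuotientGroup.leftRel_apply.1 ha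
      replace hb : b₁⁻¹ * b₂ ∈ D.subgroupOf V := QuotientGroup.leftRel_apply.1 hb
      have hc : Commute ((a₁⁻¹ * a₂ : U) : G) (b₁ * (b₁⁻¹ * b₂ : V) : G) := by
        rw [show (b₁ * (b₁⁻¹ * b₂ : V) : G) = b₂ by simp]
        exact ((mem_centralizer_iff.1 (hC ha)) b₂ b₂.2).symm
      have hd : Commute ((b₁⁻¹ * b₂ : V) : G) a₁ :=
        ((mem_centralizer_iff.1 (hD hb)) a₁ a₁.2).symm
      simpa using (commutatorElement_mul_mul_eq hc hd).symm
  refine (Set.finite_range (uncurry f)).subset ?_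
  rintro _ ⟨a, ha, b, hb, rfl⟩
  exact ⟨(⟦⟨a, ha⟩⟧, ⟦⟨b, hb⟩⟧), rfl⟩

end Commutators

namespace MultilinearCommutatorWord

variable {G H : Type*} [Group G] [Group H] {m n : ℕ}

theorem map_eval (φ : G →* H) : ∀ {n : ℕ} (w : MultilinearCommutatorWord n) (f : Fin n → G),
    φ (w.eval f) = w.eval (φ ∘ f)
  | _, var, _ => rfl
  | _, comm u v, f => by
    simp only [eval, map_commutatorElement, map_eval φ u, map_eval φ v]
    rfl

def verbal (w : MultilinearCommutatorWord n) (G : Type*) [Group G] : Subgroup G :=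
  Subgroup.closure {g : G | ∃ f : Fin n → G, w.eval f = g}

theorem map_verbal_le (w : MultilinearCommutatorWord n) (φ : G →* H) :
    (w.verbal G).map φ ≤ w.verbal H := by
  rw [verbal, MonoidHom.map_closure]
  refine closure_mono ?_
  rintro _ ⟨_, ⟨f, rfl⟩, rfl⟩
  exact ⟨φ ∘ f, (map_eval φ w f).symm⟩

theorem map_verbal_of_surjective (w : MultilinearCommutatorWord n) {φ : G →* H}
    (hφ : Surjective φ) : (w.verbal G).map φ = w.verbal H := by
  refine (map_verbal_le w φ).antisymm ?_
  rw [verbal, closure_le]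
  rintro _ ⟨f, rfl⟩
  obtain ⟨g, rfl⟩ := hφ.comp_left f
  exact ⟨w.eval g, subset_closure ⟨g, rfl⟩, map_eval φ w g⟩

instance (w : MultilinearCommutatorWord n) : (w.verbal G).Characteristic :=
  characteristic_iff_map_le.2 fun φ => map_verbal_le w φ.toMonoidHom

theorem verbal_comm_le (u : MultilinearCommutatorWord m) (v : MultilinearCommutatorWord n) :
    (u.comm v).verbal G ≤ ⁅u.verbal G, v.verbal G⁆ := by
  rw [verbal, closure_le]
  rintro _ ⟨f, rfl⟩
  exact commutator_mem_commutator (subset_closure ⟨_, rfl⟩) (subset_closure ⟨_, rfl⟩)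

theorem eval_comm_append (u : MultilinearCommutatorWord m) (v : MultilinearCommutatorWord n)
    (g : Fin m → G) (h : Fin n → G) :
    (u.comm v).eval (Fin.append g h) = ⁅u.eval g, v.eval h⁆ := by
  simp [eval]

end MultilinearCommutatorWord

theorem Fin.update_append_castAdd {α : Type*} {m n : ℕ} (g : Fin m → α) (h : Fin n → α)
    (i : Fin m) (x : α) :
    update (Fin.append g h) (Fin.castAdd n i) x = Fin.append (update g i x) h := by
  ext k
  refine Fin.addCases (fun k => ?_) (fun k => ?_) k
  · simp [update_apply, Fin.ext_iff]
  · simp [update_apply, Fin.ext_iff]; omega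

theorem Fin.update_append_natAdd {α : Type*} {m n : ℕ} (g : Fin m → α) (h : Fin n → α)
    (j : Fin n) (x : α) :
    update (Fin.append g h) (Fin.natAdd m j) x = Fin.append g (update h j x) := by
  ext k
  refine Fin.addCases (fun k => ?_) (fun k => ?_) k
  · simp [update_apply, Fin.ext_iff]; omega
  · simp [update_apply, Fin.ext_iff]

section Marginal

open MultilinearCommutatorWord

variable {G : Type*} [Group G] {m n : ℕ}

theorem map_mem_marginal_iff {H : Type*} [Group H] {φ : G →* H} (hφ : Surjective φ)
    {w : MultilinearCommutatorWord n} {s : G} :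
    φ s ∈ marginal w ↔ ∀ (g : Fin n → G) (i : Fin n),
      φ (w.eval (update g i (s * g i))) = φ (w.eval g) ∧
      φ (w.eval (update g i (g i * s))) = φ (w.eval g) := by
  simp only [marginal, Set.mem_ofPred_eq, (hφ.comp_left (α := Fin n)).forall, map_eval,
    comp_update, comp_apply, map_mul]

theorem mk_mem_marginal_iff {K : Subgroup G} [K.Normal] {w : MultilinearCommutatorWord n}
    {s : G} :
    (s : G ⧸ K) ∈ marginal w ↔ ∀ (g : Fin n → G) (i : Fin n),
      (w.eval (update g i (s * g i)))⁻¹ * w.eval g ∈ K ∧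
      (w.eval (update g i (g i * s)))⁻¹ * w.eval g ∈ K := by
  simpa only [QuotientGroup.mk'_apply, QuotientGroup.eq] using
    map_mem_marginal_iff (QuotientGroup.mk'_surjective K) (w := w) (s := s)

theorem eq_one_of_mem_marginal_var {s : G} (hs : s ∈ marginal var) : s = 1 := by
  simpa [MultilinearCommutatorWord.eval] using (hs 1 0).1

theorem mk_mem_marginal_of_mem_marginal_comm_left {u : MultilinearCommutatorWord m}
    {v : MultilinearCommutatorWord n} {s : G} (hs : s ∈ marginal (u.comm v)) :
    (s : G ⧸ centralizer (v.verbal G : Set G)) ∈ marginal u := by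
  rw [mk_mem_marginal_iff]
  intro g i
  simp only [verbal, centralizer_closure, mem_centralizer_iff]
  constructor <;> rintro _ ⟨h, rfl⟩ <;> apply commute_inv_mul_of_commutatorElement_eq_left
  · simpa [Fin.update_append_castAdd, eval_comm_append] using
      (hs (Fin.append g h) (Fin.castAdd n i)).1
  · simpa [Fin.update_append_castAdd, eval_comm_append] using
      (hs (Fin.append g h) (Fin.castAdd n i)).2

theorem mk_mem_marginal_of_mem_marginal_comm_right {u : MultilinearCommutatorWord m}
    {v : MultilinearCommutatorWord n} {s : G} (hs : s ∈ marginal (u.comm v)) :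
    (s : G ⧸ centralizer (u.verbal G : Set G)) ∈ marginal v := by
  rw [mk_mem_marginal_iff]
  intro h j
  simp only [verbal, centralizer_closure, mem_centralizer_iff]
  constructor <;> rintro _ ⟨g, rfl⟩ <;> apply commute_inv_mul_of_commutatorElement_eq_right
  · simpa [Fin.update_append_natAdd, eval_comm_append] using
      (hs (Fin.append g h) (Fin.natAdd m j)).1
  · simpa [Fin.update_append_natAdd, eval_comm_append] using
      (hs (Fin.append g h) (Fin.natAdd m j)).2

end Marginal

theorem Subgroup.finiteIndex_map_of_surjective {G H : Type*} [Group G] [Group H] {f : G →* H}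
    (hf : Surjective f) (N : Subgroup G) [N.FiniteIndex] : (N.map f).FiniteIndex :=
  ⟨ne_zero_of_dvd_ne_zero FiniteIndex.index_ne_zero (N.index_map_dvd hf)⟩

open MultilinearCommutatorWord in
/-- For `w = ⁅u, v⁆`, modulo the centralizer of `v(Q)` (resp. `u(Q)`) the marginal subgroup of `w`
is marginal for `u` (resp. `v`), so `u(Q)` (resp. `v(Q)`) is finite modulo that centralizer. -/
theorem finite_verbal_of_le_marginal : ∀ {n : ℕ} (w : MultilinearCommutatorWord n) {Q : Type*}
    [Group Q] (N : Subgroup Q) [N.FiniteIndex], (N : Set Q) ⊆ marginal w → Finite (w.verbal Q)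
  | _, .var, Q, _, N, _, hN => by
    have hbot : N = ⊥ := eq_bot_iff.2 fun s hs => mem_bot.2 (eq_one_of_mem_marginal_var (hN hs))
    have : Finite Q := (finite_iff_finite_and_finiteIndex (H := N)).2 ⟨hbot ▸ inferInstance, ‹_›⟩
    infer_instance
  | _, .comm u v, Q, _, N, _, hN => by
    set C := centralizer (v.verbal Q : Set Q)
    set D := centralizer (u.verbal Q : Set Q)
    have := Subgroup.finiteIndex_map_of_surjective (QuotientGroup.mk'_surjective C) N
    have := Subgroup.finiteIndex_map_of_surjective (QuotientGroup.mk'_surjective D) N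
    have hu : Finite (u.verbal (Q ⧸ C)) :=
      finite_verbal_of_le_marginal u (N.map (QuotientGroup.mk' C)) <| by
        rintro _ ⟨s, hs, rfl⟩; exact mk_mem_marginal_of_mem_marginal_comm_left (hN hs)
    have hv : Finite (v.verbal (Q ⧸ D)) :=
      finite_verbal_of_le_marginal v (N.map (QuotientGroup.mk' D)) <| by
        rintro _ ⟨s, hs, rfl⟩; exact mk_mem_marginal_of_mem_marginal_comm_right (hN hs)
    rw [← map_verbal_of_surjective u (QuotientGroup.mk'_surjective C)] at hu
    rw [← map_verbal_of_surjective v (QuotientGroup.mk'_surjective D)] at hv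
    have : Finite (⁅u.verbal Q, v.verbal Q⁆ : Subgroup Q) :=
      finite_commutator_of_finite_commutatorSetOf <| finite_commutatorSetOf le_rfl le_rfl
        (relIndex_ne_zero_of_finite_map_mk hu) (relIndex_ne_zero_of_finite_map_mk hv)
    exact Finite.of_injective _ (inclusion_injective (verbal_comm_le u v))

section Residual

open MultilinearCommutatorWord

variable {G : Type*} [Group G] {n : ℕ}

def marginalDefects (w : MultilinearCommutatorWord n) (S : Set G) : Set G :=
  {d | ∃ s ∈ S, ∃ (g : Fin n → G) (i : Fin n),
    d = (w.eval (update g i (s * g i)))⁻¹ * w.eval g ∨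
      d = (w.eval (update g i (g i * s)))⁻¹ * w.eval g}

theorem forall_mk_mem_marginal_iff {K : Subgroup G} [K.Normal] {w : MultilinearCommutatorWord n}
    {S : Set G} : (∀ s ∈ S, (s : G ⧸ K) ∈ marginal w) ↔ marginalDefects w S ⊆ K := by
  simp only [mk_mem_marginal_iff]
  constructor
  · rintro h _ ⟨s, hs, g, i, rfl | rfl⟩
    exacts [(h s hs g i).1, (h s hs g i).2]
  · exact fun h s hs g i => ⟨h ⟨s, hs, g, i, .inl rfl⟩, h ⟨s, hs, g, i, .inr rfl⟩⟩

theorem marginalDefects_subset_verbal (w : MultilinearCommutatorWord n) (S : Set G) :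
    marginalDefects w S ⊆ w.verbal G := by
  rintro _ ⟨s, -, g, i, rfl | rfl⟩ <;>
    exact mul_mem (inv_mem (subset_closure ⟨_, rfl⟩)) (subset_closure ⟨_, rfl⟩)

variable [TopologicalSpace G] [IsTopologicalGroup G]

theorem wStarResidual_eq (w : MultilinearCommutatorWord n) (S : Set G) :
    wStarResidual w S = (normalClosure (marginalDefects w S)).topologicalClosure := by
  have := is_normal_topologicalClosure (normalClosure (marginalDefects w S))
  refine le_antisymm (sInf_le ⟨isClosed_topologicalClosure _, this, ?_⟩) (le_sInf ?_)
  · exact forall_mk_mem_marginal_iff.2 (subset_normalClosure.trans (le_topologicalClosure _))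
  · rintro K ⟨hK, _, hS⟩
    exact topologicalClosure_minimal _
      (normalClosure_le_normal (forall_mk_mem_marginal_iff.1 hS)) hK

theorem map_topologicalClosure_le_of_isClosed {G' : Type*} [Group G'] [TopologicalSpace G']
    {f : G →* G'} (hf : Continuous f) {H : Subgroup G} {K : Subgroup G'}
    (hK : IsClosed (K : Set G')) (hHK : H.map f ≤ K) : H.topologicalClosure.map f ≤ K :=
  map_le_iff_le_comap.2 <|
    topologicalClosure_minimal _ (map_le_iff_le_comap.1 hHK) (hK.preimage hf)

theorem relIndex_topologicalClosure_verbal_ne_zero [CompactSpace G]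
    {w : MultilinearCommutatorWord n} {N R : Subgroup G} [R.Normal] (hR : IsClosed (R : Set G))
    (hN : IsOpen (N : Set G)) (hNR : ∀ s ∈ N, (s : G ⧸ R) ∈ marginal w) :
    R.relIndex (w.verbal G).topologicalClosure ≠ 0 := by
  have := quotient_finite_of_isOpen N hN
  have : N.FiniteIndex := finiteIndex_of_finite_quotient
  have := finiteIndex_map_of_surjective (QuotientGroup.mk'_surjective R) N
  have : Finite (w.verbal (G ⧸ R)) :=
    finite_verbal_of_le_marginal w (N.map (QuotientGroup.mk' R)) <| by
      rintro _ ⟨s, hs, rfl⟩; exact hNR s hs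
  have : IsClosed (R : Set G) := hR
  have hle := map_topologicalClosure_le_of_isClosed (f := QuotientGroup.mk' R)
    QuotientGroup.continuous_mk (Set.toFinite (w.verbal (G ⧸ R) : Set (G ⧸ R))).isClosed
    (map_verbal_le w _)
  exact relIndex_ne_zero_of_finite_map_mk (Finite.of_injective _ (inclusion_injective hle))

end Residual

theorem wStarResidual_open_in_verbal_general {G : Type*} [Group G] [TopologicalSpace G]
    [IsTopologicalGroup G] [CompactSpace G]
    {n : ℕ} (w : MultilinearCommutatorWord n)
    (N : Subgroup G) (hNo : IsOpen (N : Set G)) :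
    wStarResidual w (N : Set G) ≤
        (Subgroup.closure {g : G | ∃ f : Fin n → G, w.eval f = g}).topologicalClosure ∧
      IsClosed ((wStarResidual w (N : Set G) : Set G)) ∧
      (wStarResidual w (N : Set G)).relIndex
        (Subgroup.closure {g : G | ∃ f : Fin n → G, w.eval f = g}).topologicalClosure ≠ 0 := by
  change _ ≤ (w.verbal G).topologicalClosure ∧ _ ∧
    (wStarResidual w N).relIndex (w.verbal G).topologicalClosure ≠ 0
  rw [wStarResidual_eq]
  have := is_normal_topologicalClosure (normalClosure (marginalDefects w (N : Set G)))
  refine ⟨topologicalClosure_mono (normalClosure_le_normal (marginalDefects_subset_verbal w _)),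
    isClosed_topologicalClosure _,
    relIndex_topologicalClosure_verbal_ne_zero (isClosed_topologicalClosure _) hNo ?_⟩
  exact forall_mk_mem_marginal_iff.2 (subset_normalClosure.trans (le_topologicalClosure _))

/-- Let `w` be a multilinear commutator word, `G` a profinite group and `N` an open normal
subgroup of `G`. Then the `w*`-residual of `N` is an open subgroup of the verbal subgroup
`w(G)`: it is a closed subgroup of `w(G)` of finite index. -/
theorem wStarResidual_open_in_verbal {G : Type*} [Group G] [TopologicalSpace G]
    [IsTopologicalGroup G] [CompactSpace G] [T2Space G] [TotallyDisconnectedSpace G]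
    {n : ℕ} (w : MultilinearCommutatorWord n)
    (N : Subgroup G) (hNn : N.Normal) (hNo : IsOpen (N : Set G)) :
    wStarResidual w (N : Set G) ≤
        (Subgroup.closure {g : G | ∃ f : Fin n → G, w.eval f = g}).topologicalClosure ∧
      IsClosed ((wStarResidual w (N : Set G) : Set G)) ∧
      (wStarResidual w (N : Set G)).relIndex
        (Subgroup.closure {g : G | ∃ f : Fin n → G, w.eval f = g}).topologicalClosure ≠ 0 :=
  wStarResidual_open_in_verbal_general w N hNo
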